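/- Let G be an edge-weighted graph on K vertices with weights in [0,1] and let G[m] be its m-fold blow-up. In the drawing of G[m] obtained by clustering each blow-up class in a tiny disk around the corresponding vertex of an optimal drawing of G, the weighted number of crossings is at most m^4·cr̄(G) + K·C(m,2)·C(Km,2), and K·C(m,2)·C(Km,2) ≤ K^3 m^4. -/

import Mathlib

open Finset
open scoped Classical BigOperators

noncomputable section

/-- Orientation determinant of an ordered triple of planar points. -/
def orient (p q r : ℝ × ℝ) : ℝ :=
  (q.1 - p.1) * (r.2 - p.2) - (q.2 - p.2) * (r.1 - p.1)

/-- A point placement is in general position if no three distinct vertices are collinear. -/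
def GenPos {V : Type*} (f : V → ℝ × ℝ) : Prop :=
  ∀ a b c : V, a ≠ b → a ≠ c → b ≠ c → orient (f a) (f b) (f c) ≠ 0

/-- Two straight-line segments cross: their interiors meet. -/
def SegCross (p q r s : ℝ × ℝ) : Prop :=
  (openSegment ℝ p q ∩ openSegment ℝ r s).Nonempty

/-- Weighted number of crossing pairs of edges in a straight-line drawing:
each unordered crossing pair {ab, cd} is counted once (via 8 ordered tuples). -/
def crossCount {V : Type*} [Fintype V] (w : V → V → ℝ) (f : V → ℝ × ℝ) : ℝ :=
  (∑ a : V, ∑ b : V, ∑ c : V, ∑ d : V,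
      if a ≠ b ∧ a ≠ c ∧ a ≠ d ∧ b ≠ c ∧ b ≠ d ∧ c ≠ d ∧
          SegCross (f a) (f b) (f c) (f d)
        then w a b * w c d else 0) / 8

/-- Rectilinear crossing number of an edge-weighted graph. -/
def wrcr (V : Type*) [Fintype V] (w : V → V → ℝ) : ℝ :=
  sInf {x : ℝ | ∃ f : V → ℝ × ℝ, Function.Injective f ∧ GenPos f ∧ crossCount w f = x}

/-- 0/1 edge weights of a simple graph. -/
def adjW {V : Type*} (G : SimpleGraph V) : V → V → ℝ :=
  fun u v => if G.Adj u v then 1 else 0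

/-- Rectilinear crossing number of a simple graph. -/
def rcr (n : ℕ) (G : SimpleGraph (Fin n)) : ℝ := wrcr (Fin n) (adjW G)

/-- Weighted number of edges between two vertex subsets. -/
def eW {V : Type*} (w : V → V → ℝ) (S T : Finset V) : ℝ :=
  ∑ u ∈ S, ∑ v ∈ T, w u v

/-- Number of edges of a simple graph between two vertex subsets
(edges inside the intersection counted twice). -/
def eG {n : ℕ} (G : SimpleGraph (Fin n)) (S T : Finset (Fin n)) : ℝ :=
  eW (adjW G) S T

/-- The part (fiber) of a colouring. -/
def fiber {n K : ℕ} (col : Fin n → Fin K) (i : Fin K) : Finset (Fin n) :=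
  Finset.univ.filter (fun v => col v = i)

/-- A colouring is an equitable partition: any two parts differ in size by at most one. -/
def EquitableCol {n K : ℕ} (col : Fin n → Fin K) : Prop :=
  ∀ i j : Fin K, (fiber col i).card ≤ (fiber col j).card + 1

/-- All transversals of three point sets have the same orientation. -/
def SameType3 (A B C : Finset (ℝ × ℝ)) : Prop :=
  ∀ a ∈ A, ∀ b ∈ B, ∀ c ∈ C, ∀ a' ∈ A, ∀ b' ∈ B, ∀ c' ∈ C,
    Real.sign (orient a b c) = Real.sign (orient a' b' c')

/-- Four point sets have same-type transversals. -/
def SameTypeQuad (A B C D : Finset (ℝ × ℝ)) : Prop :=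
  SameType3 A B C ∧ SameType3 A B D ∧ SameType3 A C D ∧ SameType3 B C D

/-- Four points are in convex position. -/
def ConvexPos4 (a b c d : ℝ × ℝ) : Prop :=
  a ∉ convexHull ℝ ({b, c, d} : Set (ℝ × ℝ)) ∧
  b ∉ convexHull ℝ ({a, c, d} : Set (ℝ × ℝ)) ∧
  c ∉ convexHull ℝ ({a, b, d} : Set (ℝ × ℝ)) ∧
  d ∉ convexHull ℝ ({a, b, c} : Set (ℝ × ℝ))

/-! Split the crossing pairs of edges of the clustered drawing by the classes of their four
endpoints. If the four classes are distinct, the pair crosses exactly when the corresponding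
pair of the optimal drawing of `G` does; summed over the `m⁴` lifts this gives `m⁴ cr̄(G)`. An edge
inside a class has weight `0`. In every other crossing pair two endpoints `p`, `q` on different
edges share a class, and for the remaining endpoints `x`, `y` at most one of the pairings
`{px, qy}`, `{py, qx}` crosses, since four points in general position cannot realise both
crossings. So these pairs number at most `K·C(m,2)·C(Km,2)`, each of weight at most `1`. -/

lemma orient_add_smul (p q r s : ℝ × ℝ) {a b : ℝ} (hab : a + b = 1) :
    orient p q (a • r + b • s) = a * orient p q r + b * orient p q s := by
  obtain rfl : b = 1 - a := by linarith
  simp only [orient, Prod.fst_add, Prod.snd_add, Prod.smul_fst, Prod.smul_snd, smul_eq_mul]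
  ring

lemma orient_self_first (p q : ℝ × ℝ) : orient p q p = 0 := by
  simp [orient]

lemma orient_self_second (p q : ℝ × ℝ) : orient p q q = 0 := by
  simp only [orient]; ring

lemma SegCross.orient_mul_nonpos {p q r s : ℝ × ℝ} (h : SegCross p q r s) :
    orient p q r * orient p q s ≤ 0 := by
  obtain ⟨x, ⟨a, b, -, -, hab, rfl⟩, ⟨a', b', ha', hb', hab', hx⟩⟩ := h
  have hline : a' * orient p q r + b' * orient p q s = 0 := by
    rw [← orient_add_smul _ _ _ _ hab', hx, orient_add_smul _ _ _ _ hab, orient_self_first,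
      orient_self_second, mul_zero, mul_zero, add_zero]
  have : a' * (orient p q r * orient p q s) = -(b' * orient p q s ^ 2) := by
    linear_combination orient p q s * hline
  nlinarith [mul_nonneg hb'.le (sq_nonneg (orient p q s))]

lemma segCross_comm {p q r s : ℝ × ℝ} : SegCross p q r s ↔ SegCross r s p q := by
  rw [SegCross, SegCross, Set.inter_comm]

lemma segCross_swap_left {p q r s : ℝ × ℝ} : SegCross p q r s ↔ SegCross q p r s := by
  rw [SegCross, SegCross, openSegment_symm]

lemma segCross_swap_right {p q r s : ℝ × ℝ} : SegCross p q r s ↔ SegCross p q s r := by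
  rw [SegCross, SegCross, openSegment_symm ℝ r s]

lemma not_segCross_of_segCross {a b c d : ℝ × ℝ}
    (habc : orient a b c ≠ 0) (habd : orient a b d ≠ 0)
    (hacd : orient a c d ≠ 0) (hbcd : orient b c d ≠ 0)
    (h : SegCross a b c d) : ¬ SegCross a d c b := by
  intro h'
  have e1 := h.orient_mul_nonpos
  have e2 := (segCross_comm.mp h).orient_mul_nonpos
  have e3 := h'.orient_mul_nonpos
  have e4 := (segCross_comm.mp h').orient_mul_nonpos
  have q2 : orient c d a * orient c d b = orient a c d * orient b c d := by
    simp only [orient]; ring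
  have q3 : orient a d c * orient a d b = orient a c d * orient a b d := by
    simp only [orient]; ring
  have q4 : orient c b a * orient c b d = orient a b c * orient b c d := by
    simp only [orient]; ring
  have hsum : orient b c d = orient a b c - orient a b d + orient a c d := by
    simp only [orient]; ring
  rw [q2] at e2; rw [q3] at e3; rw [q4] at e4
  -- The signs of `orient a b c`, `orient a c d` agree and are opposite to those of
  -- `orient a b d` and `orient b c d`, which contradicts `hsum`.
  rcases habc.lt_or_gt with hA | hA <;> rcases habd.lt_or_gt with hB | hB <;>
    rcases hacd.lt_or_gt with hC | hC <;> rcases hbcd.lt_or_gt with hD | hD <;>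
    nlinarith

section Drawing

variable {V : Type*}

def Crossing (f : V → ℝ × ℝ) (a b c d : V) : Prop :=
  a ≠ b ∧ a ≠ c ∧ a ≠ d ∧ b ≠ c ∧ b ≠ d ∧ c ≠ d ∧ SegCross (f a) (f b) (f c) (f d)

def crossTerm (w : V → V → ℝ) (f : V → ℝ × ℝ) (a b c d : V) : ℝ :=
  if Crossing f a b c d then w a b * w c d else 0

lemma crossCount_eq_sum_crossTerm [Fintype V] (w : V → V → ℝ) (f : V → ℝ × ℝ) :
    crossCount w f = (∑ a, ∑ b, ∑ c, ∑ d, crossTerm w f a b c d) / 8 := by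
  unfold crossCount crossTerm Crossing
  congr!

lemma GenPos.not_crossing_swap {f : V → ℝ × ℝ} (hf : GenPos f) {a b c d : V}
    (h : Crossing f a b c d) : ¬ Crossing f a d c b := by
  obtain ⟨hab, hac, had, hbc, hbd, hcd, hcross⟩ := h
  exact fun h' => not_segCross_of_segCross (hf a b c hab hac hbc) (hf a b d hab had hbd)
    (hf a c d hac had hcd) (hf b c d hbc hbd hcd) hcross h'.2.2.2.2.2.2

lemma GenPos.card_crossing_le [Fintype V] {f : V → ℝ × ℝ} (hf : GenPos f) (a c : V) :
    #{p : V × V | Crossing f a p.1 c p.2} ≤ (Fintype.card V).choose 2 := by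
  rw [← Finset.card_univ, ← Sym2.card_image_offDiag]
  refine card_le_card_of_injOn (fun p => s(p.1, p.2)) ?_ ?_
  · rintro ⟨b, d⟩ hp
    simp only [coe_filter, mem_univ, true_and, Set.mem_ofPred_eq] at hp
    simp only [coe_image, coe_offDiag, Set.mem_image]
    exact ⟨(b, d), by simpa using hp.2.2.2.2.1, rfl⟩
  · rintro ⟨b, d⟩ hp ⟨b', d'⟩ hp' heq
    simp only [coe_filter, mem_univ, true_and, Set.mem_ofPred_eq] at hp hp'
    rcases Sym2.eq_iff.mp heq with ⟨rfl, rfl⟩ | ⟨rfl, rfl⟩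
    · rfl
    · exact absurd hp' (hf.not_crossing_swap hp)

lemma Crossing.swap_left {f : V → ℝ × ℝ} {a b c d : V} (h : Crossing f a b c d) :
    Crossing f b a c d := by
  obtain ⟨hab, hac, had, hbc, hbd, hcd, hcross⟩ := h
  exact ⟨hab.symm, hbc, hbd, hac, had, hcd, segCross_swap_left.mp hcross⟩

lemma Crossing.swap_right {f : V → ℝ × ℝ} {a b c d : V} (h : Crossing f a b c d) :
    Crossing f a b d c := by
  obtain ⟨hab, hac, had, hbc, hbd, hcd, hcross⟩ := h
  exact ⟨hab, had, hac, hbd, hbc, hcd.symm, segCross_swap_right.mp hcross⟩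

lemma crossTerm_nonneg {w : V → V → ℝ} (hw : ∀ u v, 0 ≤ w u v) (f : V → ℝ × ℝ) (a b c d : V) :
    0 ≤ crossTerm w f a b c d := by
  unfold crossTerm
  split_ifs
  exacts [mul_nonneg (hw a b) (hw c d), le_rfl]

end Drawing

section BlowUp

variable {V W : Type*} (π : V → W) (g : V → ℝ × ℝ)

def classCross (a b c d : V) : ℝ :=
  if Crossing g a b c d ∧ π a = π c then 1 else 0

lemma classCross_nonneg (a b c d : V) : 0 ≤ classCross π g a b c d := by
  unfold classCross; split_ifs <;> norm_num

variable {π g}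

lemma one_le_sum_classCross {a b c d : V} (hcr : Crossing g a b c d)
    (hcls : π a = π c ∨ π a = π d ∨ π b = π c ∨ π b = π d) :
    1 ≤ classCross π g a b c d + classCross π g a b d c +
      classCross π g b a c d + classCross π g b a d c := by
  have h₁ := classCross_nonneg π g a b c d
  have h₂ := classCross_nonneg π g a b d c
  have h₃ := classCross_nonneg π g b a c d
  have h₄ := classCross_nonneg π g b a d c
  rcases hcls with h | h | h | h
  · have : classCross π g a b c d = 1 := if_pos ⟨hcr, h⟩
    linarith
  · have : classCross π g a b d c = 1 := if_pos ⟨hcr.swap_right, h⟩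
    linarith
  · have : classCross π g b a c d = 1 := if_pos ⟨hcr.swap_left, h⟩
    linarith
  · have : classCross π g b a d c = 1 := if_pos ⟨hcr.swap_left.swap_right, h⟩
    linarith

lemma crossTerm_comp_le {w : W → W → ℝ} {F : W → ℝ × ℝ} (hdiag : ∀ i, w i i = 0)
    (hw : ∀ i j, 0 ≤ w i j ∧ w i j ≤ 1)
    (hsame : ∀ a b c d : V, π a ≠ π b → π a ≠ π c → π a ≠ π d → π b ≠ π c → π b ≠ π d →
      π c ≠ π d → (SegCross (g a) (g b) (g c) (g d) ↔
        SegCross (F (π a)) (F (π b)) (F (π c)) (F (π d))))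
    (a b c d : V) :
    crossTerm (fun u v => w (π u) (π v)) g a b c d ≤ crossTerm w F (π a) (π b) (π c) (π d) +
      (classCross π g a b c d + classCross π g a b d c +
        classCross π g b a c d + classCross π g b a d c) := by
  have hF := crossTerm_nonneg (fun i j => (hw i j).1) F (π a) (π b) (π c) (π d)
  have h₁ := classCross_nonneg π g a b c d
  have h₂ := classCross_nonneg π g a b d c
  have h₃ := classCross_nonneg π g b a c d
  have h₄ := classCross_nonneg π g b a d c
  by_cases hcr : Crossing g a b c d
  swap
  · rw [crossTerm, if_neg hcr]; linarith
  rw [crossTerm, if_pos hcr]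
  by_cases hab : π a = π b
  · rw [show w (π a) (π b) = 0 by rw [hab, hdiag], zero_mul]; linarith
  by_cases hcd : π c = π d
  · rw [show w (π c) (π d) = 0 by rw [hcd, hdiag], mul_zero]; linarith
  by_cases hcls : π a ≠ π c ∧ π a ≠ π d ∧ π b ≠ π c ∧ π b ≠ π d
  · obtain ⟨hac, had, hbc, hbd⟩ := hcls
    have hFcr : Crossing F (π a) (π b) (π c) (π d) := ⟨hab, hac, had, hbc, hbd, hcd,
      (hsame a b c d hab hac had hbc hbd hcd).mp hcr.2.2.2.2.2.2⟩
    rw [crossTerm, if_pos hFcr]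
    linarith
  · have hone := one_le_sum_classCross (π := π) hcr (by tauto)
    nlinarith [hw (π a) (π b), hw (π c) (π d)]

variable [Fintype V]

lemma sum_classCross_le_ite (hg : GenPos g) (a c : V) :
    ∑ b, ∑ d, classCross π g a b c d ≤
      if a ≠ c ∧ π a = π c then ((Fintype.card V).choose 2 : ℝ) else 0 := by
  split_ifs with hac
  · calc ∑ b, ∑ d, classCross π g a b c d
        = ∑ p : V × V, if Crossing g a p.1 c p.2 then (1 : ℝ) else 0 := by
          rw [Fintype.sum_prod_type]
          simp only [classCross, hac.2, and_true]
      _ = #{p : V × V | Crossing g a p.1 c p.2} := by rw [sum_boole]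
      _ ≤ (Fintype.card V).choose 2 := by exact_mod_cast hg.card_crossing_le a c
  · refine (sum_eq_zero fun b _ => sum_eq_zero fun d _ => if_neg ?_).le
    rintro ⟨hcr, hπ⟩
    exact hac ⟨hcr.2.1, hπ⟩

lemma sum_classCross_le (hg : GenPos g) :
    ∑ a, ∑ b, ∑ c, ∑ d, classCross π g a b c d ≤
      Nat.card {p : V × V // p.1 ≠ p.2 ∧ π p.1 = π p.2} * ((Fintype.card V).choose 2 : ℝ) := by
  calc ∑ a, ∑ b, ∑ c, ∑ d, classCross π g a b c d
      = ∑ a, ∑ c, ∑ b, ∑ d, classCross π g a b c d := sum_congr rfl fun a _ => sum_comm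
    _ ≤ ∑ a, ∑ c, if a ≠ c ∧ π a = π c then ((Fintype.card V).choose 2 : ℝ) else 0 :=
        sum_le_sum fun a _ => sum_le_sum fun c _ => sum_classCross_le_ite hg a c
    _ = _ := by
        rw [← Fintype.sum_prod_type' (f := fun a c => if a ≠ c ∧ π a = π c then _ else _),
          ← sum_filter, sum_const, nsmul_eq_mul, Nat.card_eq_fintype_card, Fintype.card_subtype]

lemma sum_crossTerm_comp_le {w : W → W → ℝ} {F : W → ℝ × ℝ} (hdiag : ∀ i, w i i = 0)
    (hw : ∀ i j, 0 ≤ w i j ∧ w i j ≤ 1)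
    (hsame : ∀ a b c d : V, π a ≠ π b → π a ≠ π c → π a ≠ π d → π b ≠ π c → π b ≠ π d →
      π c ≠ π d → (SegCross (g a) (g b) (g c) (g d) ↔
        SegCross (F (π a)) (F (π b)) (F (π c)) (F (π d))))
    (hg : GenPos g) :
    ∑ a, ∑ b, ∑ c, ∑ d, crossTerm (fun u v => w (π u) (π v)) g a b c d ≤
      ∑ a, ∑ b, ∑ c, ∑ d, crossTerm w F (π a) (π b) (π c) (π d) +
        4 * (Nat.card {p : V × V // p.1 ≠ p.2 ∧ π p.1 = π p.2} *
          ((Fintype.card V).choose 2 : ℝ)) := by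
  have hswap_ab : ∀ s : V → V → V → V → ℝ,
      ∑ a, ∑ b, ∑ c, ∑ d, s b a c d = ∑ a, ∑ b, ∑ c, ∑ d, s a b c d :=
    fun s => sum_comm
  have hswap_cd : ∀ s : V → V → V → V → ℝ,
      ∑ a, ∑ b, ∑ c, ∑ d, s a b d c = ∑ a, ∑ b, ∑ c, ∑ d, s a b c d :=
    fun s => sum_congr rfl fun a _ => sum_congr rfl fun b _ => sum_comm
  calc _ ≤ ∑ a, ∑ b, ∑ c, ∑ d, (crossTerm w F (π a) (π b) (π c) (π d) +
        (classCross π g a b c d + classCross π g a b d c +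
          classCross π g b a c d + classCross π g b a d c)) := by
        gcongr with a _ b _ c _ d _
        exact crossTerm_comp_le hdiag hw hsame a b c d
    _ = ∑ a, ∑ b, ∑ c, ∑ d, crossTerm w F (π a) (π b) (π c) (π d) +
        4 * ∑ a, ∑ b, ∑ c, ∑ d, classCross π g a b c d := by
        simp only [sum_add_distrib]
        rw [hswap_cd (classCross π g), hswap_ab (classCross π g),
          hswap_ab (fun a b c d => classCross π g a b d c), hswap_cd (classCross π g)]
        ring
    _ ≤ _ := by gcongr; exact sum_classCross_le hg

end BlowUp

section Product

variable {W ι : Type*} [Fintype W] [Fintype ι]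

lemma card_offDiag_univ : #(univ : Finset ι).offDiag = 2 * (Fintype.card ι).choose 2 := by
  rw [← Sym2.two_mul_card_image_offDiag, Sym2.card_image_offDiag, card_univ]

lemma card_sameFst_le :
    Nat.card {p : (W × ι) × (W × ι) // p.1 ≠ p.2 ∧ p.1.1 = p.2.1} ≤
      Fintype.card W * (2 * (Fintype.card ι).choose 2) := by
  rw [Nat.card_eq_fintype_card, Fintype.card_subtype, ← card_offDiag_univ, ← card_univ,
    ← card_product]
  refine card_le_card_of_injOn (fun p => (p.1.1, p.1.2, p.2.2)) ?_ ?_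
  · rintro ⟨⟨i, s⟩, ⟨j, t⟩⟩ hp
    simp only [coe_filter, mem_univ, true_and, Set.mem_ofPred_eq] at hp
    obtain ⟨hne, rfl⟩ := hp
    simpa using hne
  · rintro ⟨⟨i, s⟩, ⟨j, t⟩⟩ hp ⟨⟨i', s'⟩, ⟨j', t'⟩⟩ hp' heq
    simp only [coe_filter, mem_univ, true_and, Set.mem_ofPred_eq] at hp hp'
    obtain ⟨-, rfl⟩ := hp
    obtain ⟨-, rfl⟩ := hp'
    simp_all

lemma sum₄_comp_fst {M : Type*} [AddCommMonoid M] (f : W → W → W → W → M) :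
    ∑ a : W × ι, ∑ b : W × ι, ∑ c : W × ι, ∑ d : W × ι, f a.1 b.1 c.1 d.1 =
      Fintype.card ι ^ 4 • ∑ i, ∑ j, ∑ k, ∑ l, f i j k l := by
  simp only [Fintype.sum_prod_type, sum_const, card_univ, ← smul_sum, smul_smul]
  ring_nf

end Product

theorem stmt_9_general (K m : ℕ) (w : Fin K → Fin K → ℝ)
    (hdiag : ∀ i, w i i = 0)
    (hw : ∀ i j, 0 ≤ w i j ∧ w i j ≤ 1)
    (F : Fin K → ℝ × ℝ)
    (hopt : crossCount w F = wrcr (Fin K) w)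
    (g : Fin K × Fin m → ℝ × ℝ) (hggp : GenPos g)
    (hsame : ∀ i j k l : Fin K, i ≠ j → i ≠ k → i ≠ l → j ≠ k → j ≠ l → k ≠ l →
      ∀ a b c d : Fin m,
        (SegCross (g (i, a)) (g (j, b)) (g (k, c)) (g (l, d)) ↔
          SegCross (F i) (F j) (F k) (F l))) :
    crossCount (fun u v : Fin K × Fin m => w u.1 v.1) g
      ≤ (m : ℝ) ^ 4 * wrcr (Fin K) w
        + ((K * Nat.choose m 2 * Nat.choose (K * m) 2 : ℕ) : ℝ) ∧
    ((K * Nat.choose m 2 * Nat.choose (K * m) 2 : ℕ) : ℝ)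
      ≤ (K : ℝ) ^ 3 * (m : ℝ) ^ 4 := by
  have hbound := sum_crossTerm_comp_le hdiag hw
    (fun a b c d h₁ h₂ h₃ h₄ h₅ h₆ => hsame _ _ _ _ h₁ h₂ h₃ h₄ h₅ h₆ a.2 b.2 c.2 d.2) hggp
  have hclasses := card_sameFst_le (W := Fin K) (ι := Fin m)
  rw [Fintype.card_fin, Fintype.card_fin] at hclasses
  rw [sum₄_comp_fst (fun i j k l => crossTerm w F i j k l), Fintype.card_prod,
    Fintype.card_fin, Fintype.card_fin, nsmul_eq_mul] at hbound
  refine ⟨?_, ?_⟩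
  · rw [crossCount_eq_sum_crossTerm, ← hopt, crossCount_eq_sum_crossTerm]
    have hbad := Nat.cast_le (α := ℝ).mpr (Nat.mul_le_mul_right ((K * m).choose 2) hclasses)
    push_cast at hbad hbound ⊢
    linarith
  · exact_mod_cast calc K * m.choose 2 * (K * m).choose 2
        ≤ K * m ^ 2 * (K * m) ^ 2 := by gcongr <;> exact Nat.choose_le_pow _ 2
      _ = K ^ 3 * m ^ 4 := by ring

/-- In the clustered drawing of the blow-up `G[m]` (each class drawn in a tiny disk around
the corresponding vertex of an optimal drawing of `G`, so crossings between four distinct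
classes match those of the optimal drawing), the weighted number of crossings is at most
`m^4 cr̄(G) + K·C(m,2)·C(Km,2)`, and `K·C(m,2)·C(Km,2) ≤ K^3 m^4`. -/
theorem stmt_9 (K m : ℕ) (w : Fin K → Fin K → ℝ)
    (hsymm : ∀ i j, w i j = w j i) (hdiag : ∀ i, w i i = 0)
    (hw : ∀ i j, 0 ≤ w i j ∧ w i j ≤ 1)
    (F : Fin K → ℝ × ℝ) (hFinj : Function.Injective F) (hFgp : GenPos F)
    (hopt : crossCount w F = wrcr (Fin K) w)
    (g : Fin K × Fin m → ℝ × ℝ) (hginj : Function.Injective g) (hggp : GenPos g)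
    (hsame : ∀ i j k l : Fin K, i ≠ j → i ≠ k → i ≠ l → j ≠ k → j ≠ l → k ≠ l →
      ∀ a b c d : Fin m,
        (SegCross (g (i, a)) (g (j, b)) (g (k, c)) (g (l, d)) ↔
          SegCross (F i) (F j) (F k) (F l))) :
    crossCount (fun u v : Fin K × Fin m => w u.1 v.1) g
      ≤ (m : ℝ) ^ 4 * wrcr (Fin K) w
        + ((K * Nat.choose m 2 * Nat.choose (K * m) 2 : ℕ) : ℝ) ∧
    ((K * Nat.choose m 2 * Nat.choose (K * m) 2 : ℕ) : ℝ)
      ≤ (K : ℝ) ^ 3 * (m : ℝ) ^ 4 :=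
  stmt_9_general K m w hdiag hw F hopt g hggp hsame
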